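/- arXiv:1509.04037 — 3 statements merged into one kernel-verified Lean document; each statement's English description precedes it below -/
import Mathlib

section
/- A signed graph is balanced if and only if its vertex set can be partitioned into two (possibly empty) sets such that every negative edge joins vertices in different sets and every positive edge joins vertices in the same set. -/
/-!
Cutting out of a closed walk a closed subwalk that is a cycle or a back-and-forth step along one
edge (both positive in a balanced graph) does not change its sign, and repeating this reduces it
to the trivial walk (`Walk.bypass`); so in a balanced graph every closed walk is positive. Hence
all walks between two vertices have the same sign, and the vertices reached from the root of
their component by positive walks form one side. Conversely, if every edge sign is the product of
the `±1` labels of its ends, the sign of a walk telescopes to the product of the labels of its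
endpoints, so every closed walk is positive.
-/

open SimpleGraph

/-- The sign of a walk: the product of the signs of its consecutive edges, where
`σ u v = true` means the edge `uv` is positive and `σ u v = false` means it is negative. -/
def walkSign {V : Type*} {G : SimpleGraph V} (σ : V → V → Bool) {u v : V}
    (w : G.Walk u v) : ℤ :=
  ((w.support.zip w.support.tail).map (fun p => if σ p.1 p.2 then (1 : ℤ) else -1)).prod

/-- A signed graph is balanced if every cycle has positive sign. -/
def IsBalanced {V : Type*} (G : SimpleGraph V) (σ : V → V → Bool) : Prop :=
  ∀ (u : V) (w : G.Walk u u), w.IsCycle → walkSign σ w = 1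

namespace SignedGraph

variable {V : Type*} {G : SimpleGraph V} (σ : V → V → Bool)

def edgeSign (u v : V) : ℤ := if σ u v then 1 else -1

open Classical in
noncomputable def sideSign (X : Set V) (v : V) : ℤ := if v ∈ X then 1 else -1

variable {σ}

theorem edgeSign_mul_self (u v : V) : edgeSign σ u v * edgeSign σ u v = 1 := by
  unfold edgeSign; cases σ u v <;> rfl

theorem edgeSign_comm (hσ : ∀ u v, σ u v = σ v u) (u v : V) :
    edgeSign σ u v = edgeSign σ v u := by
  rw [edgeSign, edgeSign, hσ]

theorem sideSign_mul_self (X : Set V) (v : V) : sideSign X v * sideSign X v = 1 := by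
  unfold sideSign; split_ifs <;> rfl

theorem exists_sideSign_eq {φ : V → ℤ} (hφ : ∀ v, φ v * φ v = 1) :
    ∃ X : Set V, sideSign X = φ := by
  refine ⟨{v | φ v = 1}, funext fun v => ?_⟩
  rcases mul_self_eq_one_iff.1 (hφ v) with h | h <;> simp [sideSign, h]

theorem edgeSign_eq_sideSign_mul_iff {X : Set V} {u v : V} :
    edgeSign σ u v = sideSign X u * sideSign X v ↔
      (σ u v = true ↔ (u ∈ X ↔ v ∈ X)) := by
  unfold edgeSign sideSign
  by_cases hu : u ∈ X <;> by_cases hv : v ∈ X <;> cases σ u v <;> simp [hu, hv]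

@[simp]
theorem walkSign_nil {u : V} : walkSign σ (Walk.nil : G.Walk u u) = 1 := rfl

@[simp]
theorem walkSign_cons {u v w : V} (h : G.Adj u v) (p : G.Walk v w) :
    walkSign σ (Walk.cons h p) = edgeSign σ u v * walkSign σ p := by
  unfold walkSign
  rw [Walk.support_cons, List.tail_cons, ← p.cons_tail_support]
  simp only [List.zip_cons_cons, List.map_cons, List.prod_cons, List.tail_cons]
  rfl

@[simp]
theorem walkSign_append {u v w : V} (p : G.Walk u v) (q : G.Walk v w) :
    walkSign σ (p.append q) = walkSign σ p * walkSign σ q := by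
  induction p with
  | nil => simp
  | cons h p ih => simp [ih, mul_assoc]

@[simp]
theorem walkSign_concat {u v w : V} (p : G.Walk u v) (h : G.Adj v w) :
    walkSign σ (p.concat h) = walkSign σ p * edgeSign σ v w := by
  simp [Walk.concat_eq_append]

@[simp]
theorem walkSign_copy {u v u' v' : V} (p : G.Walk u v) (hu : u = u') (hv : v = v') :
    walkSign σ (p.copy hu hv) = walkSign σ p := by
  subst hu hv; rfl

theorem walkSign_mul_self {u v : V} (p : G.Walk u v) : walkSign σ p * walkSign σ p = 1 := by
  induction p with
  | nil => rfl
  | cons h p ih =>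
    rw [walkSign_cons, mul_mul_mul_comm, edgeSign_mul_self, ih, one_mul]

theorem walkSign_reverse (hσ : ∀ u v, σ u v = σ v u) {u v : V} (p : G.Walk u v) :
    walkSign σ p.reverse = walkSign σ p := by
  induction p with
  | nil => rfl
  | cons h p ih =>
    rw [Walk.reverse_cons, ← Walk.concat_eq_append, walkSign_concat, ih, walkSign_cons,
      edgeSign_comm hσ, mul_comm]

theorem walkSign_eq_sideSign_mul {X : Set V}
    (hX : ∀ u v, G.Adj u v → edgeSign σ u v = sideSign X u * sideSign X v)
    {u v : V} (p : G.Walk u v) : walkSign σ p = sideSign X u * sideSign X v := by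
  induction p with
  | nil => exact (sideSign_mul_self X _).symm
  | @cons a b c h p ih =>
    rw [walkSign_cons, ih, hX a b h]
    linear_combination sideSign X a * sideSign X c * sideSign_mul_self X b

section Balanced

variable (hσ : ∀ u v, σ u v = σ v u) (hb : IsBalanced G σ)
include hσ hb

theorem walkSign_cons_eq_one_of_isPath {u v : V} (h : G.Adj u v) {p : G.Walk v u}
    (hp : p.IsPath) : walkSign σ (Walk.cons h p) = 1 := by
  by_cases he : s(u, v) ∈ p.edges
  · rw [hp.eq_adj_toWalk_of_mem_edges (Sym2.eq_swap ▸ he)]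
    simp [Adj.toWalk, edgeSign_comm hσ v u, edgeSign_mul_self]
  · exact hb u _ ((Walk.cons_isCycle_iff p h).2 ⟨hp, he⟩)

theorem walkSign_bypass [DecidableEq V] {u v : V} (p : G.Walk u v) :
    walkSign σ p.bypass = walkSign σ p := by
  induction p with
  | nil => rfl
  | @cons a b c h p ih =>
    rw [Walk.bypass]
    split_ifs with ha
    · have hsplit := congrArg (walkSign σ) (p.bypass.take_spec ha)
      rw [walkSign_append, ih] at hsplit
      rw [walkSign_cons, ← hsplit, ← mul_assoc, ← walkSign_cons h,
        walkSign_cons_eq_one_of_isPath hσ hb h (p.bypass_isPath.takeUntil ha), one_mul]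
    · rw [walkSign_cons, walkSign_cons, ih]

theorem walkSign_loop_eq_one {u : V} (p : G.Walk u u) : walkSign σ p = 1 := by
  classical
  rw [← walkSign_bypass hσ hb, Walk.eq_nil_iff_nil.2 (Walk.isPath_iff_nil.1 p.bypass_isPath),
    walkSign_nil]

theorem walkSign_eq_of_isBalanced {u v : V} (p q : G.Walk u v) :
    walkSign σ p = walkSign σ q := by
  have hpq := walkSign_loop_eq_one hσ hb (p.append q.reverse)
  rw [walkSign_append, walkSign_reverse hσ] at hpq
  linear_combination walkSign σ q * hpq - walkSign σ p * walkSign_mul_self q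

theorem exists_edgeSign_eq_sideSign_mul :
    ∃ X : Set V, ∀ u v, G.Adj u v → edgeSign σ u v = sideSign X u * sideSign X v := by
  let root (v : V) : V := (G.connectedComponentMk v).out
  let walkFromRoot (v : V) : G.Walk (root v) v :=
    (ConnectedComponent.exact (Quot.out_eq (G.connectedComponentMk v))).some
  obtain ⟨X, hX⟩ := exists_sideSign_eq fun v => walkSign_mul_self (σ := σ) (walkFromRoot v)
  refine ⟨X, fun u v h => ?_⟩
  have hroot : root u = root v :=
    congrArg Quot.out (ConnectedComponent.connectedComponentMk_eq_of_adj h)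
  have hφ : walkSign σ (walkFromRoot v) = walkSign σ (walkFromRoot u) * edgeSign σ u v := by
    rw [walkSign_eq_of_isBalanced hσ hb (walkFromRoot v)
      (((walkFromRoot u).concat h).copy hroot rfl), walkSign_copy, walkSign_concat]
  simp only [hX]
  rw [hφ, ← mul_assoc, walkSign_mul_self, one_mul]

end Balanced

end SignedGraph

open SignedGraph

/-- A signed graph is balanced iff its vertex set can be partitioned into two (possibly empty)
sets so that every negative edge joins vertices in different sets and every positive edge
joins vertices in the same set. -/
theorem balanced_iff_bipolar {V : Type*} (G : SimpleGraph V) (σ : V → V → Bool)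
    (hσ : ∀ u v, σ u v = σ v u) :
    IsBalanced G σ ↔
      ∃ X : Set V, ∀ u v, G.Adj u v → ((σ u v = true) ↔ (u ∈ X ↔ v ∈ X)) := by
  constructor
  · intro hb
    obtain ⟨X, hX⟩ := exists_edgeSign_eq_sideSign_mul hσ hb
    exact ⟨X, fun u v h => edgeSign_eq_sideSign_mul_iff.1 (hX u v h)⟩
  · rintro ⟨X, hX⟩ u p -
    rw [walkSign_eq_sideSign_mul (fun a b h => edgeSign_eq_sideSign_mul_iff.2 (hX a b h)) p,
      sideSign_mul_self]
end

section
/- For a connected signed graph, the smallest eigenvalue of the signed Laplacian matrix equals 0 if and only if the graph is balanced. -/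
open Matrix

/-- For a connected signed graph, the smallest eigenvalue of the signed Laplacian matrix
`L = D - A` equals `0` iff the graph is balanced, i.e. the vertices admit a 2-coloring
with no frustrated edges (every positive edge joins same-colored vertices and every
negative edge joins differently colored vertices). -/
theorem smallest_laplacian_eigenvalue_zero_iff_balanced {n : ℕ} [NeZero n]
    (G : SimpleGraph (Fin n)) [DecidableRel G.Adj] (hconn : G.Connected)
    (σ : Fin n → Fin n → Bool) (hσ : ∀ u v, σ u v = σ v u)
    (A D : Matrix (Fin n) (Fin n) ℝ)
    (hA : ∀ u v, A u v = if G.Adj u v then (if σ u v then 1 else -1) else 0)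
    (hD : D = Matrix.diagonal (fun i => ∑ j, |A i j|))
    (hL : (D - A).IsHermitian) :
    (⨅ i, hL.eigenvalues i) = 0 ↔
      ∃ c : Fin n → Bool, ∀ u v, G.Adj u v → (σ u v = true ↔ c u = c v) := by
  classical
  have hAsymm : ∀ u v, A u v = A v u := by
    intro u v
    rw [hA, hA, hσ]
    by_cases h : G.Adj u v
    · rw [if_pos h, if_pos h.symm]
    · rw [if_neg h, if_neg fun h' => h h'.symm]
  have hcases : ∀ u v, A u v = 1 ∨ A u v = -1 ∨ A u v = 0 := by
    intro u v; rw [hA]; split_ifs <;> simp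
  -- quadratic form expansion
  have expand : ∀ x : Fin n → ℝ, x ⬝ᵥ (D - A) *ᵥ x =
      (∑ u, (∑ j, |A u j|) * x u ^ 2) - ∑ u, ∑ v, x u * A u v * x v := by
    intro x
    rw [Matrix.sub_mulVec, dotProduct_sub, hD]
    congr 1
    · simp only [dotProduct, Matrix.mulVec_diagonal]
      exact Finset.sum_congr rfl fun u _ => by ring
    · simp only [dotProduct, Matrix.mulVec]
      exact Finset.sum_congr rfl fun u _ => by
        rw [Finset.mul_sum]; exact Finset.sum_congr rfl fun v _ => by ring
  have key : ∀ x : Fin n → ℝ, 2 * (x ⬝ᵥ (D - A) *ᵥ x) =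
      ∑ u, ∑ v, |A u v| * (x u - A u v * x v) ^ 2 := by
    intro x
    have hterm : ∀ u v, |A u v| * (x u - A u v * x v) ^ 2 =
        |A u v| * x u ^ 2 + |A u v| * x v ^ 2 - 2 * (x u * A u v * x v) := by
      intro u v
      rcases hcases u v with h | h | h <;> rw [h] <;> norm_num <;> ring
    simp only [hterm, Finset.sum_sub_distrib, Finset.sum_add_distrib]
    have h1 : ∑ u, ∑ v, |A u v| * x u ^ 2 = ∑ u, (∑ j, |A u j|) * x u ^ 2 := by
      exact Finset.sum_congr rfl fun u _ => by rw [Finset.sum_mul]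
    have h2 : ∑ u : Fin n, ∑ v : Fin n, |A u v| * x v ^ 2
        = ∑ u, (∑ j, |A u j|) * x u ^ 2 := by
      rw [Finset.sum_comm]
      exact Finset.sum_congr rfl fun v _ => by
        rw [Finset.sum_mul]
        exact Finset.sum_congr rfl fun u _ => by rw [hAsymm v u]
    have h3 : ∑ u : Fin n, ∑ v : Fin n, 2 * (x u * A u v * x v)
        = 2 * ∑ u, ∑ v, x u * A u v * x v := by
      rw [Finset.mul_sum]
      exact Finset.sum_congr rfl fun u _ => by rw [Finset.mul_sum]
    rw [expand, h1, h2, h3]; ring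
  -- positive semidefiniteness of the quadratic form
  have hq : ∀ x : Fin n → ℝ, 0 ≤ x ⬝ᵥ (D - A) *ᵥ x := by
    intro x
    have h := key x
    have hnn : 0 ≤ ∑ u, ∑ v, |A u v| * (x u - A u v * x v) ^ 2 :=
      Finset.sum_nonneg fun u _ => Finset.sum_nonneg fun v _ =>
        mul_nonneg (abs_nonneg _) (sq_nonneg _)
    linarith
  -- all eigenvalues are nonnegative
  have hev : ∀ i, 0 ≤ hL.eigenvalues i := by
    intro i
    set v : Fin n → ℝ := ⇑(hL.eigenvectorBasis i) with hv
    have hmul : (D - A) *ᵥ v = hL.eigenvalues i • v := hL.mulVec_eigenvectorBasis i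
    have hvne : v ≠ 0 := by
      intro h
      exact hL.eigenvectorBasis.orthonormal.ne_zero i (by ext j; exact congrFun h j)
    have hvv : 0 < v ⬝ᵥ v := by
      obtain ⟨j, hj⟩ := Function.ne_iff.mp hvne
      simp only [Pi.zero_apply] at hj
      have : v ⬝ᵥ v = ∑ k, v k * v k := rfl
      rw [this]
      exact Finset.sum_pos' (fun k _ => mul_self_nonneg _)
        ⟨j, Finset.mem_univ j, mul_self_pos.mpr hj⟩
    have h0 : 0 ≤ hL.eigenvalues i * (v ⬝ᵥ v) := by
      have := hq v
      rwa [hmul, dotProduct_smul, smul_eq_mul] at this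
    exact (mul_nonneg_iff_of_pos_right hvv).mp h0
  have hbdd : BddBelow (Set.range hL.eigenvalues) := by
    refine ⟨0, ?_⟩; rintro _ ⟨i, rfl⟩; exact hev i
  constructor
  · -- smallest eigenvalue zero → balanced
    intro hinf
    -- there is an index attaining the infimum
    obtain ⟨i, hi⟩ : ∃ i, ∀ j, hL.eigenvalues i ≤ hL.eigenvalues j := by
      obtain ⟨i, _, hi⟩ := Finset.exists_min_image Finset.univ hL.eigenvalues
        ⟨(0 : Fin n), Finset.mem_univ _⟩
      exact ⟨i, fun j => hi j (Finset.mem_univ j)⟩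
    have hie : hL.eigenvalues i = 0 := by
      have h1 : hL.eigenvalues i ≤ ⨅ j, hL.eigenvalues j := le_ciInf hi
      have h2 : (⨅ j, hL.eigenvalues j) ≤ hL.eigenvalues i := ciInf_le hbdd i
      rw [hinf] at h1 h2
      linarith [hev i]
    set x : Fin n → ℝ := ⇑(hL.eigenvectorBasis i) with hx
    have hmul : (D - A) *ᵥ x = 0 := by
      rw [hL.mulVec_eigenvectorBasis i, hie, zero_smul]
    have hxne : x ≠ 0 := by
      intro h
      exact hL.eigenvectorBasis.orthonormal.ne_zero i (by ext j; exact congrFun h j)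
    -- quadratic form vanishes, hence every term vanishes
    have hq0 : ∑ u, ∑ v, |A u v| * (x u - A u v * x v) ^ 2 = 0 := by
      have := key x
      rw [hmul, dotProduct_zero, mul_zero] at this
      linarith
    have hterm0 : ∀ u v, |A u v| * (x u - A u v * x v) ^ 2 = 0 := by
      intro u v
      have h1 := (Finset.sum_eq_zero_iff_of_nonneg fun u _ =>
        Finset.sum_nonneg fun v _ => mul_nonneg (abs_nonneg _) (sq_nonneg _)).mp hq0
        u (Finset.mem_univ u)
      exact (Finset.sum_eq_zero_iff_of_nonneg fun v _ =>
        mul_nonneg (abs_nonneg _) (sq_nonneg _)).mp h1 v (Finset.mem_univ v)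
    have hedge : ∀ u v, G.Adj u v → x u = A u v * x v := by
      intro u v huv
      have hA1 : |A u v| ≠ 0 := by
        rw [hA]; simp only [huv, if_true]
        split_ifs <;> norm_num
      have := hterm0 u v
      have h2 : (x u - A u v * x v) ^ 2 = 0 := by
        rcases mul_eq_zero.mp this with h | h
        · exact absurd h hA1
        · exact h
      have := pow_eq_zero_iff (n := 2) (by norm_num) |>.mp h2
      linarith
    have habs : ∀ u v, G.Adj u v → |x u| = |x v| := by
      intro u v huv
      rw [hedge u v huv, abs_mul]
      rw [hA]; simp only [huv, if_true]
      split_ifs <;> norm_num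
    -- |x| is constant by connectivity, and x is nonzero somewhere
    obtain ⟨u0, hu0⟩ := Function.ne_iff.mp hxne
    simp only [Pi.zero_apply] at hu0
    have hwalk : ∀ u w : Fin n, ∀ p : G.Walk u w, |x u| = |x w| := by
      intro u w p
      induction p with
      | nil => rfl
      | cons h p ih => rw [habs _ _ h, ih]
    have hconst : ∀ w, |x w| = |x u0| :=
      fun w => ((hconn.preconnected u0 w).elim fun p => (hwalk u0 w p).symm)
    have hne : ∀ w, x w ≠ 0 := by
      intro w hw
      apply hu0
      have := hconst w
      rw [hw, abs_zero] at this
      exact abs_eq_zero.mp this.symm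
    refine ⟨fun u => decide (0 < x u), fun u v huv => ?_⟩
    rw [decide_eq_decide]
    have hx0u := hne u
    have hx0v := hne v
    have he := hedge u v huv
    rw [hA] at he; simp only [huv, if_true] at he
    by_cases hs : σ u v
    · rw [hs] at he ⊢
      simp only [if_true, one_mul] at he
      rw [he]; simp
    · rw [Bool.not_eq_true] at hs
      rw [hs] at he ⊢
      simp only [Bool.false_eq_true, if_false, neg_one_mul] at he
      constructor
      · intro h; exact absurd h (by simp)
      · intro h
        exfalso
        rcases lt_or_gt_of_ne hx0v with hv | hv
        · have hu : 0 < x u := by rw [he]; linarith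
          have := h.mp hu
          linarith
        · have := h.mpr hv
          rw [he] at this
          linarith
  · -- balanced → smallest eigenvalue zero
    rintro ⟨c, hc⟩
    set x : Fin n → ℝ := fun u => if c u then 1 else -1 with hx
    have hxne : x ≠ 0 := by
      intro h
      have := congrFun h 0
      rw [hx] at this
      simp only [Pi.zero_apply] at this
      split_ifs at this <;> norm_num at this
    have hmul : (D - A) *ᵥ x = 0 := by
      funext u
      have hrow : ∀ v, A u v * x v = |A u v| * x u := by
        intro v
        by_cases huv : G.Adj u v
        · have hcuv := hc u v huv
          rw [hA]; simp only [huv, if_true]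
          by_cases hs : σ u v
          · rw [hs]
            have : c u = c v := hcuv.mp hs
            simp only [if_true, hx, this]
            norm_num
          · rw [Bool.not_eq_true] at hs
            rw [hs]
            have hne : c u ≠ c v := fun h => by
              have := hcuv.mpr h; rw [hs] at this; exact Bool.false_ne_true this
            simp only [Bool.false_eq_true, if_false, hx]
            rcases Bool.eq_false_or_eq_true (c u) with h1 | h1 <;>
              rcases Bool.eq_false_or_eq_true (c v) with h2 | h2 <;>
                simp [h1, h2] at hne ⊢ <;> norm_num
        · rw [hA]; simp [huv]
      rw [Matrix.sub_mulVec]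
      simp only [Pi.sub_apply, Pi.zero_apply, Matrix.mulVec, dotProduct]
      rw [hD]
      simp only [Matrix.diagonal_apply]
      rw [Finset.sum_congr rfl (fun v _ => hrow v)]
      have hdsum : ∑ v : Fin n, (if u = v then ∑ j, |A u j| else 0) * x v
          = (∑ j, |A u j|) * x u := by
        rw [Finset.sum_eq_single u]
        · rw [if_pos rfl]
        · intro b _ hb; rw [if_neg fun h => hb h.symm, zero_mul]
        · intro h; exact absurd (Finset.mem_univ u) h
      rw [hdsum, ← Finset.sum_mul, sub_self]
    have hdet : (D - A).det = 0 := Matrix.exists_mulVec_eq_zero_iff.mp ⟨x, hxne, hmul⟩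
    have hprod : ∏ i, hL.eigenvalues i = 0 := by
      have h := hL.det_eq_prod_eigenvalues
      rw [hdet] at h
      exact_mod_cast h.symm
    obtain ⟨i, _, hi⟩ := Finset.prod_eq_zero_iff.mp hprod
    refine le_antisymm ?_ (le_ciInf hev)
    calc (⨅ j, hL.eigenvalues j) ≤ hL.eigenvalues i := ciInf_le hbdd i
    _ = 0 := hi
end

section
/- For the complete graph K_n^a on n ≥ 3 vertices with exactly one negative edge, the number of cycles of length k (3 ≤ k ≤ n) containing the negative edge is (n−2)!/(n−k)!, and the total number of k-cycles is n!/(2k(n−k)!). Hence the relative k-balance is D_k(K_n^a) = 1 − 2k/(n(n−1)). -/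
/-!
A closed walk of length `k ≥ 3` in the complete graph on `n` vertices is a cycle exactly when
its vertex sequence `i ↦ getVert i` is an injection `Fin k ↪ Fin n`, and every such injection,
read cyclically, is the vertex sequence of one cycle; hence there are `n.descFactorial k` cycles.
The cycle uses the edge `ab` iff `a` sits at some position `i` and `b` at `i + 1` or `i - 1`.
These `2k` placements are pairwise exclusive, and each leaves the remaining `k - 2` positions
to be filled injectively from `n - 2` vertices, giving `2k · (n - 2).descFactorial (k - 2)`.
Since `n.descFactorial k = n (n - 1) · (n - 2).descFactorial (k - 2)`, the balanced fraction is
`1 - 2k / (n (n - 1))`.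
-/

open SimpleGraph

namespace Equiv

variable {α β : Type*}

def embeddingApplyEq [DecidableEq α] (i : α) (x : β) :
    {f : α ↪ β // f i = x} ≃ ({z // z ≠ i} ↪ {y // y ≠ x}) where
  toFun f := ⟨fun z => ⟨f.1 z, fun h => z.2 (f.1.injective (h.trans f.2.symm))⟩,
    fun z z' h => Subtype.ext (f.1.injective (congrArg Subtype.val h))⟩
  invFun g := ⟨⟨fun z => if h : z = i then x else g ⟨z, h⟩, by
      intro z z' h
      by_cases hz : z = i <;> by_cases hz' : z' = i <;>
        simp only [hz, hz', dite_true, dite_false] at h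
      · exact hz.trans hz'.symm
      · exact absurd h.symm (g _).2
      · exact absurd h (g _).2
      · exact congrArg Subtype.val (g.injective (Subtype.ext h))⟩, dif_pos rfl⟩
  left_inv f := by
    ext z
    by_cases hz : z = i
    · subst hz
      simp [f.2]
    · simp [hz]
      rfl
  right_inv g := by
    ext z
    simp [z.2]

@[simp]
lemma coe_embeddingApplyEq_apply [DecidableEq α] {i : α} {x : β} (f : {f : α ↪ β // f i = x})
    (z : {z // z ≠ i}) : (embeddingApplyEq i x f z : β) = f.1 z :=
  rfl

end Equiv

namespace Fintype

variable {α β : Type*} [Fintype α] [DecidableEq α] [Fintype β] [DecidableEq β]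

lemma card_subtype_ne (i : α) : card {z // z ≠ i} = card α - 1 := by
  rw [card_subtype_compl, card_subtype_eq]

lemma card_embedding_apply_eq (i : α) (x : β) :
    card {f : α ↪ β // f i = x} = (card β - 1).descFactorial (card α - 1) := by
  rw [card_congr (Equiv.embeddingApplyEq i x), card_embedding_eq, card_subtype_ne,
    card_subtype_ne]

lemma card_embedding_apply_eq_or {i j : α} (hij : i ≠ j) (x : β) :
    card {f : α ↪ β // f i = x ∨ f j = x} =
      2 * (card β - 1).descFactorial (card α - 1) := by
  rw [card_subtype_or_disjoint, card_embedding_apply_eq, card_embedding_apply_eq, two_mul]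
  rintro P hi hj f hf
  exact hij (f.injective ((hi f hf).trans (hj f hf).symm))

lemma card_embedding_apply_eq_and_or {i j l : α} (hji : j ≠ i) (hli : l ≠ i) (hjl : j ≠ l)
    {x y : β} (hyx : y ≠ x) :
    card {f : α ↪ β // f i = x ∧ (f j = y ∨ f l = y)} =
      2 * (card β - 2).descFactorial (card α - 2) := by
  let e := (Equiv.subtypeSubtypeEquivSubtypeInter (fun f : α ↪ β => f i = x)
      (fun f => f j = y ∨ f l = y)).symm.trans
    (Equiv.subtypeEquiv (Equiv.embeddingApplyEq i x)
      (q := fun g => g ⟨j, hji⟩ = ⟨y, hyx⟩ ∨ g ⟨l, hli⟩ = ⟨y, hyx⟩)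
      (fun f => by simp [Subtype.ext_iff]))
  rw [card_congr e, card_embedding_apply_eq_or (by simpa using hjl), card_subtype_ne,
    card_subtype_ne]
  rfl

end Fintype

namespace Fin

variable {k : ℕ} [NeZero k]

lemma add_one_ne_self (hk : 2 ≤ k) (i : Fin k) : i + 1 ≠ i := by
  rw [Ne, add_eq_left, one_eq_zero_iff]
  omega

lemma sub_one_ne_self (hk : 2 ≤ k) (i : Fin k) : i - 1 ≠ i :=
  fun h => add_one_ne_self hk (i - 1) (by rw [sub_add_cancel, h])

lemma add_one_ne_sub_one (hk : 3 ≤ k) (i : Fin k) : i + 1 ≠ i - 1 := by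
  intro h
  have h2 : (1 + 1 : Fin k) = 0 := by
    rw [← sub_eq_zero.mpr h]
    abel
  rw [Fin.ext_iff, val_add, val_one', Nat.mod_eq_of_lt (by omega : 1 < k), val_zero,
    Nat.mod_eq_of_lt (by omega)] at h2
  omega

lemma exists_sym2_apply_add_one_eq_iff {β : Type*} (f : Fin k → β) (a b : β) :
    (∃ i, s(f i, f (i + 1)) = s(a, b)) ↔
      ∃ i, f i = a ∧ (f (i + 1) = b ∨ f (i - 1) = b) := by
  constructor
  · rintro ⟨i, hi⟩
    rcases Sym2.eq_iff.mp hi with ⟨hia, hib⟩ | ⟨hib, hia⟩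
    · exact ⟨i, hia, .inl hib⟩
    · exact ⟨i + 1, hia, .inr (by rwa [add_sub_cancel_right])⟩
  · rintro ⟨i, hia, hib | hib⟩
    · exact ⟨i, by rw [hia, hib]⟩
    · exact ⟨i - 1, by rw [sub_add_cancel, hia, hib, Sym2.eq_swap]⟩

end Fin

lemma Fintype.card_embedding_exists_sym2_apply_add_one_eq {β : Type*} [Fintype β]
    [DecidableEq β] {k : ℕ} [NeZero k] (hk : 3 ≤ k) {a b : β} (hab : a ≠ b) :
    card {f : Fin k ↪ β // ∃ i, s(f i, f (i + 1)) = s(a, b)} =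
      2 * k * (card β - 2).descFactorial (k - 2) := by
  simp_rw [Fin.exists_sym2_apply_add_one_eq_iff, card_subtype]
  have hunion :
      ({f | ∃ i, f i = a ∧ (f (i + 1) = b ∨ f (i - 1) = b)} : Finset (Fin k ↪ β)) =
        Finset.univ.biUnion fun i => {f | f i = a ∧ (f (i + 1) = b ∨ f (i - 1) = b)} := by
    ext
    simp
  rw [hunion, Finset.card_biUnion]
  · simp_rw [← card_subtype]
    rw [Finset.sum_congr rfl fun i _ => card_embedding_apply_eq_and_or
      (Fin.add_one_ne_self (by omega) i) (Fin.sub_one_ne_self (by omega) i)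
      (Fin.add_one_ne_sub_one hk i) hab.symm]
    simp [mul_comm, mul_assoc]
  · intro i _ j _ hij
    simp only [Function.onFun, Finset.disjoint_left, Finset.mem_filter, Finset.mem_univ,
      true_and]
    exact fun f hi hj => hij (f.injective (hi.1.trans hj.1.symm))

lemma Nat.descFactorial_eq_mul_mul_descFactorial_sub_two (n : ℕ) {k : ℕ} (hk : 2 ≤ k) :
    n.descFactorial k = n * (n - 1) * (n - 2).descFactorial (k - 2) := by
  obtain ⟨k, rfl⟩ : ∃ j, k = j + 2 := ⟨k - 2, by omega⟩
  rcases n with _ | _ | n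
  · simp
  · simp
  · rw [Nat.succ_descFactorial_succ, Nat.succ_descFactorial_succ]
    simp [mul_assoc]

lemma Nat.card_subtype_add_card_subtype_not {α : Type*} [Finite α] (p : α → Prop) :
    Nat.card {x // p x} + Nat.card {x // ¬p x} = Nat.card α := by
  classical
  have := Fintype.ofFinite α
  simp only [Nat.card_eq_fintype_card]
  rw [Fintype.card_subtype_compl, Nat.add_sub_cancel' (Fintype.card_subtype_le p)]

namespace SimpleGraph

variable {V : Type*} {G : SimpleGraph V} {k : ℕ}

namespace Walk

lemma getVert_val_add_one [NeZero k] {u : V} (p : G.Walk u u) (hp : p.length = k) (i : Fin k) :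
    p.getVert ↑(i + 1) = p.getVert (↑i + 1) := by
  obtain ⟨m, rfl⟩ := Nat.exists_eq_succ_of_ne_zero (NeZero.ne k)
  rw [Fin.val_add_one]
  split_ifs with hi
  · rw [hi, Fin.val_last, getVert_zero, ← Nat.succ_eq_add_one, ← hp, getVert_length]
  · rfl

section ofCyclic

open Fin.NatCast

variable [NeZero k] (f : Fin k → V) (hf : ∀ i, G.Adj (f i) (f (i + 1)))

/-- The cast `ℕ → Fin k` reduces mod `k`, so the support `f 0, f 1, …, f (k - 1), f 0` closes
up. -/
def ofCyclic : G.Walk (f 0) (f 0) :=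
  (ofSupport (List.ofFn fun j : Fin (k + 1) => f (j : ℕ)) (by simp)
    (List.isChain_ofFn.mpr fun i _ => by simpa [Nat.cast_succ] using hf i)).copy
    (by simp only [List.head_ofFn, Nat.cast_zero])
    (by simp only [List.getLast_ofFn, Nat.add_sub_cancel, Fin.natCast_self])

lemma getVert_ofCyclic {n : ℕ} (hn : n ≤ k) : (ofCyclic f hf).getVert n = f n := by
  rw [ofCyclic, getVert_copy, getVert_eq_support_getElem _ (by simpa using hn)]
  simp only [support_ofSupport, List.getElem_ofFn]

lemma length_ofCyclic : (ofCyclic f hf).length = k := by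
  simp [ofCyclic]

lemma isCycle_ofCyclic (hk : 3 ≤ k) (hinj : Function.Injective f) : (ofCyclic f hf).IsCycle := by
  have hne : ¬(ofCyclic f hf).Nil := by
    rw [← length_eq_zero_iff, length_ofCyclic]
    omega
  rw [isCycle_iff_isPath_tail_and_le_length, isPath_def, support_tail_of_not_nil _ hne,
    length_ofCyclic]
  refine ⟨?_, hk⟩
  simp only [ofCyclic, support_copy, support_ofSupport, List.ofFn_succ, List.tail_cons,
    List.nodup_ofFn]
  intro i j h
  simpa [Nat.cast_succ] using hinj h

end ofCyclic

end Walk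

variable (G) in
abbrev CycleWalk (k : ℕ) : Type _ :=
  {p : (u : V) × G.Walk u u // p.2.IsCycle ∧ p.2.length = k}

namespace CycleWalk

def vertices (c : G.CycleWalk k) : Fin k ↪ V :=
  ⟨fun i => c.1.2.getVert i, fun i j h => Fin.ext <|
    c.2.1.getVert_injOn' (by simp [c.2.2]; omega) (by simp [c.2.2]; omega) h⟩

lemma vertices_apply (c : G.CycleWalk k) (i : Fin k) : c.vertices i = c.1.2.getVert i :=
  rfl

lemma adj_vertices [NeZero k] (c : G.CycleWalk k) (i : Fin k) :
    G.Adj (c.vertices i) (c.vertices (i + 1)) := by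
  rw [vertices_apply, vertices_apply, Walk.getVert_val_add_one _ c.2.2]
  exact c.1.2.adj_getVert_succ (by omega)

lemma mk_mem_edges_iff [NeZero k] (c : G.CycleWalk k) (a b : V) :
    s(a, b) ∈ c.1.2.edges ↔ ∃ i, s(c.vertices i, c.vertices (i + 1)) = s(a, b) := by
  simp only [Walk.mk_mem_edges_iff_exists, vertices_apply, Walk.getVert_val_add_one _ c.2.2,
    c.2.2]
  exact ⟨fun ⟨i, hi, h⟩ => ⟨⟨i, hi⟩, h⟩, fun ⟨i, h⟩ => ⟨i, i.2, h⟩⟩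

lemma vertices_injective [NeZero k] :
    Function.Injective (vertices : G.CycleWalk k → Fin k ↪ V) := by
  rintro ⟨⟨u, p⟩, hp, hpk⟩ ⟨⟨v, q⟩, hq, hqk⟩ h
  have hpq (i : Fin k) : p.getVert i = q.getVert i := DFunLike.congr_fun h i
  obtain rfl : u = v := by simpa using hpq 0
  obtain rfl : p = q := Walk.ext_getVert_le_length (hpk.trans hqk.symm) fun j hj => by
    rcases hj.lt_or_eq with hj | rfl
    · exact hpq ⟨j, hpk ▸ hj⟩
    · rw [Walk.getVert_length, show p.length = q.length from hpk.trans hqk.symm,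
        Walk.getVert_length]
  rfl

lemma exists_vertices_eq [NeZero k] (hk : 3 ≤ k) (f : Fin k ↪ V)
    (hf : ∀ i, G.Adj (f i) (f (i + 1))) : ∃ c : G.CycleWalk k, c.vertices = f :=
  ⟨⟨⟨f 0, Walk.ofCyclic f hf⟩, Walk.isCycle_ofCyclic f hf hk f.injective,
    Walk.length_ofCyclic f hf⟩, DFunLike.ext _ _ fun i => by
      rw [vertices_apply]
      simpa using Walk.getVert_ofCyclic f hf i.2.le⟩

noncomputable def verticesEquiv [NeZero k] (hk : 3 ≤ k) :
    G.CycleWalk k ≃ {f : Fin k ↪ V // ∀ i, G.Adj (f i) (f (i + 1))} :=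
  Equiv.ofBijective (fun c => ⟨c.vertices, c.adj_vertices⟩)
    ⟨fun _ _ h => vertices_injective (congrArg Subtype.val h),
      fun f => (exists_vertices_eq hk f.1 f.2).imp fun _ => Subtype.ext⟩

def subtypeAndEquiv (P : (u : V) × G.Walk u u → Prop) :
    {p : (u : V) × G.Walk u u // p.2.IsCycle ∧ p.2.length = k ∧ P p} ≃
      {c : G.CycleWalk k // P c.1} :=
  ((Equiv.subtypeSubtypeEquivSubtypeInter _ _).trans
    (Equiv.subtypeEquivRight fun _ => and_assoc)).symm

instance [Finite V] [NeZero k] : Finite (G.CycleWalk k) :=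
  Finite.of_injective _ vertices_injective

lemma card_mem_edges_add_card_not_mem_edges [Finite V] [NeZero k] (e : Sym2 V) :
    Nat.card {p : (u : V) × G.Walk u u // p.2.IsCycle ∧ p.2.length = k ∧ e ∈ p.2.edges} +
      Nat.card {p : (u : V) × G.Walk u u // p.2.IsCycle ∧ p.2.length = k ∧ e ∉ p.2.edges} =
      Nat.card (G.CycleWalk k) := by
  rw [← Nat.card_subtype_add_card_subtype_not fun c : G.CycleWalk k => e ∈ c.1.2.edges]
  congr 1 <;> exact Nat.card_congr (subtypeAndEquiv _)

section top

variable [Fintype V] [NeZero k]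

noncomputable def topVerticesEquiv (hk : 3 ≤ k) :
    (⊤ : SimpleGraph V).CycleWalk k ≃ (Fin k ↪ V) :=
  (verticesEquiv hk).trans <| Equiv.subtypeUnivEquiv fun f i =>
    (top_adj _ _).mpr (f.injective.ne (Fin.add_one_ne_self (by omega) i).symm)

lemma card_top (hk : 3 ≤ k) :
    Nat.card ((⊤ : SimpleGraph V).CycleWalk k) = (Fintype.card V).descFactorial k := by
  rw [Nat.card_congr (topVerticesEquiv hk), Nat.card_eq_fintype_card,
    Fintype.card_embedding_eq, Fintype.card_fin]

lemma card_top_mk_mem_edges [DecidableEq V] (hk : 3 ≤ k) {a b : V} (hab : a ≠ b) :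
    Nat.card {p : (u : V) × (⊤ : SimpleGraph V).Walk u u //
      p.2.IsCycle ∧ p.2.length = k ∧ s(a, b) ∈ p.2.edges} =
      2 * k * (Fintype.card V - 2).descFactorial (k - 2) := by
  calc _ = Nat.card {f : Fin k ↪ V // ∃ i, s(f i, f (i + 1)) = s(a, b)} :=
        Nat.card_congr <| (subtypeAndEquiv _).trans <|
          Equiv.subtypeEquiv (topVerticesEquiv hk) fun c => mk_mem_edges_iff c a b
    _ = _ := by
      rw [Nat.card_eq_fintype_card, Fintype.card_embedding_exists_sym2_apply_add_one_eq hk hab]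

end top

end CycleWalk

end SimpleGraph

/-- In the complete graph on `n ≥ 3` vertices with exactly one negative edge `ab`,
counting `k`-cycles as closed cycle-walks (so each `k`-cycle subgraph is counted `2k`
times, once for each starting point and direction): the number of `k`-cycles containing
the negative edge is `(n-2)!/(n-k)!`, the total number of `k`-cycles is `n!/(2k(n-k)!)`,
and hence the relative `k`-balance (the fraction of balanced `k`-cycles, those avoiding
the negative edge) is `1 - 2k/(n(n-1))`. -/
theorem kBalance_completeOneNegative (n k : ℕ) (hk : 3 ≤ k) (hkn : k ≤ n)
    (a b : Fin n) (hab : a ≠ b) :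
    Nat.card {p : (u : Fin n) × (⊤ : SimpleGraph (Fin n)).Walk u u //
        p.2.IsCycle ∧ p.2.length = k} * Nat.factorial (n - k) = Nat.factorial n ∧
    Nat.card {p : (u : Fin n) × (⊤ : SimpleGraph (Fin n)).Walk u u //
        p.2.IsCycle ∧ p.2.length = k ∧ s(a, b) ∈ p.2.edges} * Nat.factorial (n - k) =
      2 * k * Nat.factorial (n - 2) ∧
    (Nat.card {p : (u : Fin n) × (⊤ : SimpleGraph (Fin n)).Walk u u //
        p.2.IsCycle ∧ p.2.length = k ∧ s(a, b) ∉ p.2.edges} : ℚ) /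
      (Nat.card {p : (u : Fin n) × (⊤ : SimpleGraph (Fin n)).Walk u u //
        p.2.IsCycle ∧ p.2.length = k}) = 1 - 2 * k / (n * (n - 1)) := by
  have : NeZero k := ⟨by omega⟩
  have hall := CycleWalk.card_top (V := Fin n) hk
  have hmem := CycleWalk.card_top_mk_mem_edges hk hab
  have hsplit := CycleWalk.card_mem_edges_add_card_not_mem_edges (G := ⊤) (k := k) s(a, b)
  rw [Fintype.card_fin] at hall hmem
  rw [hmem, hall] at hsplit
  refine ⟨?_, ?_, ?_⟩
  · rw [hall, mul_comm, Nat.factorial_mul_descFactorial hkn]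
  · rw [hmem, mul_assoc, mul_comm _ (n - k).factorial,
      ← Nat.factorial_mul_descFactorial (by omega : k - 2 ≤ n - 2),
      show n - 2 - (k - 2) = n - k by omega]
  · have hD : ((n - 2).descFactorial (k - 2) : ℚ) ≠ 0 := by
      rw [Nat.cast_ne_zero, Ne, Nat.descFactorial_eq_zero_iff_lt]
      omega
    have hn : (n : ℚ) * (n - 1) ≠ 0 := by
      have : (3 : ℚ) ≤ n := by exact_mod_cast hk.trans hkn
      exact mul_ne_zero (by positivity) (by linarith)
    rw [Nat.eq_sub_of_add_eq' hsplit, Nat.cast_sub (Nat.le.intro hsplit), hall,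
      Nat.descFactorial_eq_mul_mul_descFactorial_sub_two n (by omega : 2 ≤ k)]
    push_cast [Nat.cast_sub (by omega : 1 ≤ n)]
    rw [sub_div, div_self (mul_ne_zero hn hD), mul_div_mul_right _ _ hD]
end
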